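/- Assume hypothesis (EC). Let r ∈ (0,r_T) and M ≥ M(0,r). Then V_{M,r} ≠ ∅; for every u ∈ V_{M,r} the supremum defining τ_{M,r}(u) is attained, i.e., y(T;χ_{(τ_{M,r}(u),T)}u,y₀) ∈ B(z_d,r); the second type optimal time problem (TP)^{M,r} has an optimal control; and τ(M,r) < T. -/

import Mathlib

open MeasureTheory Set Filter Topology

noncomputable section

variable {H : Type*} [NormedAddCommGroup H] [InnerProductSpace ℂ H] [CompleteSpace H]
  [SecondCountableTopology H]

/-- `U` is a strongly continuous one-parameter group of unitary operators on `H`,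
abstracting the Schrödinger group `e^{-iΔt}`. -/
def IsUnitaryGroup (U : ℝ → H →L[ℂ] H) : Prop :=
  U 0 = ContinuousLinearMap.id ℂ H ∧
  (∀ s t : ℝ, U (s + t) = (U s).comp (U t)) ∧
  (∀ (t : ℝ) (x : H), ‖U t x‖ = ‖x‖) ∧
  ∀ x : H, Continuous fun t : ℝ => U t x

/-- `B` is a nonzero orthogonal projection on `H`, abstracting multiplication by `χ_ω`. -/
def IsOrthProj (B : H →L[ℂ] H) : Prop :=
  B ≠ 0 ∧ B.comp B = B ∧ ∀ x y : H, (inner ℂ (B x) y : ℂ) = inner ℂ x (B y)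

/-- Membership in `L∞((a,b);H)`. -/
def MemLinfty (u : ℝ → H) (a b : ℝ) : Prop :=
  AEStronglyMeasurable u (volume : Measure ℝ) ∧
    ∃ c : ℝ, ∀ᵐ t : ℝ ∂volume, t ∈ Ioo a b → ‖u t‖ ≤ c

/-- Membership in `L∞((0,∞);H)`. -/
def MemLinftyInf (u : ℝ → H) : Prop :=
  AEStronglyMeasurable u (volume : Measure ℝ) ∧
    ∃ c : ℝ, ∀ᵐ t : ℝ ∂volume, t ∈ Ioi (0 : ℝ) → ‖u t‖ ≤ c

/-- The `L∞((a,b);H)` norm of `u`. -/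
def supNorm (u : ℝ → H) (a b : ℝ) : ℝ :=
  sInf {c : ℝ | 0 ≤ c ∧ ∀ᵐ t : ℝ ∂volume, t ∈ Ioo a b → ‖u t‖ ≤ c}

/-- `stateT U B T τ u y₀ = y(T; χ_{(τ,T)}u, y₀)`, the mild solution at time `T` of the
controlled Schrödinger equation with initial state `y₀`, the control acting on `(τ,T)`:
`y(T) = U(T)y₀ + ∫_τ^T U(T-s) B u(s) ds`.  The free state at time `t` starting from `y₀`
with control `u` active from time `0` is `stateT U B t 0 u y₀`. -/
def stateT (U : ℝ → H →L[ℂ] H) (B : H →L[ℂ] H) (T τ : ℝ) (u : ℝ → H) (y₀ : H) : H :=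
  U T y₀ + ∫ s in Ioo τ T, U (T - s) (B (u s))

/-- Hypothesis (EC): `L∞`-exact controllability with cost. -/
def EC (U : ℝ → H →L[ℂ] H) (B : H →L[ℂ] H) : Prop :=
  ∀ τ : ℝ, 0 < τ → ∃ C : ℝ, 0 < C ∧ ∀ y₀ z : H, ∃ u : ℝ → H,
    AEStronglyMeasurable u (volume : Measure ℝ) ∧
    (∀ᵐ t : ℝ ∂volume, t ∈ Ioo 0 τ → ‖u t‖ ≤ C * ‖z - U τ y₀‖) ∧
    stateT U B τ 0 u y₀ = z

/-- Hypothesis (UC): unique continuation. -/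
def UC (U : ℝ → H →L[ℂ] H) (B : H →L[ℂ] H) : Prop :=
  ∀ η : H, η ≠ 0 → volume {t : ℝ | B (U t η) = 0} = 0

/-- The admissible set `U_M` of the minimal time problem `(TOCP)_M`. -/
def UMset (U : ℝ → H →L[ℂ] H) (B : H →L[ℂ] H) (y₀ : H) (M : ℝ) : Set (ℝ → H) :=
  {u | MemLinftyInf u ∧ (∀ᵐ t : ℝ ∂volume, t ∈ Ioi (0 : ℝ) → ‖u t‖ ≤ M) ∧
    ∃ s : ℝ, 0 < s ∧ stateT U B s 0 u y₀ = 0}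

/-- The minimal time `T_M` of `(TOCP)_M`. -/
def Tmin (U : ℝ → H →L[ℂ] H) (B : H →L[ℂ] H) (y₀ : H) (M : ℝ) : ℝ :=
  sInf {s : ℝ | 0 < s ∧ ∃ u ∈ UMset U B y₀ M, stateT U B s 0 u y₀ = 0}

/-- The admissible set `V_T` of the minimal norm problem `(NOCP)_T`. -/
def VTset (U : ℝ → H →L[ℂ] H) (B : H →L[ℂ] H) (y₀ : H) (T : ℝ) : Set (ℝ → H) :=
  {v | MemLinfty v 0 T ∧ stateT U B T 0 v y₀ = 0}

/-- The minimal norm `M_T` of `(NOCP)_T`. -/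
def Mmin (U : ℝ → H →L[ℂ] H) (B : H →L[ℂ] H) (y₀ : H) (T : ℝ) : ℝ :=
  sInf ((fun v : ℝ → H => supNorm v 0 T) '' VTset U B y₀ T)

/-- Hypothesis (BB): bang-bang property of the minimal time problems. -/
def BB (U : ℝ → H →L[ℂ] H) (B : H →L[ℂ] H) : Prop :=
  ∀ y₀ : H, y₀ ≠ 0 → ∀ M : ℝ, 0 < M → ∀ u ∈ UMset U B y₀ M,
    stateT U B (Tmin U B y₀ M) 0 u y₀ = 0 →
    ∀ᵐ t : ℝ ∂volume, t ∈ Ioo 0 (Tmin U B y₀ M) → ‖u t‖ = M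

/-- Hypothesis (ET): existence of optimal controls for the minimal time problems. -/
def ET (U : ℝ → H →L[ℂ] H) (B : H →L[ℂ] H) : Prop :=
  ∀ y₀ : H, y₀ ≠ 0 → ∀ M : ℝ, 0 < M →
    ∃ u ∈ UMset U B y₀ M, stateT U B (Tmin U B y₀ M) 0 u y₀ = 0

/-- The admissible set `U_{M,τ}`. -/
def UadmSet (M τ T : ℝ) : Set (ℝ → H) :=
  {u | MemLinfty u 0 T ∧ ∀ᵐ t : ℝ ∂volume, t ∈ Ioo τ T → ‖u t‖ ≤ M}

/-- The optimal distance `r(M,τ)` of the optimal target problem `(OP)^{M,τ}`. -/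
def rOP (U : ℝ → H →L[ℂ] H) (B : H →L[ℂ] H) (y₀ z_d : H) (T M τ : ℝ) : ℝ :=
  sInf ((fun u : ℝ → H => ‖stateT U B T τ u y₀ - z_d‖) '' UadmSet M τ T)

/-- `u` is an optimal control to `(OP)^{M,τ}`. -/
def IsOptOP (U : ℝ → H →L[ℂ] H) (B : H →L[ℂ] H) (y₀ z_d : H) (T M τ : ℝ) (u : ℝ → H) :
    Prop :=
  u ∈ UadmSet M τ T ∧ ‖stateT U B T τ u y₀ - z_d‖ = rOP U B y₀ z_d T M τ

/-- `M^τ`, the minimal norm for exact steering to the target `z_d`. -/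
def Mtau (U : ℝ → H →L[ℂ] H) (B : H →L[ℂ] H) (y₀ z_d : H) (T τ : ℝ) : ℝ :=
  sInf ((fun u : ℝ → H => supNorm u τ T) ''
    {u : ℝ → H | MemLinfty u 0 T ∧ stateT U B T τ u y₀ = z_d})

/-- The admissible set `W_{τ,r}` of the optimal norm problem `(NP)^{τ,r}`. -/
def WadmSet (U : ℝ → H →L[ℂ] H) (B : H →L[ℂ] H) (y₀ z_d : H) (T τ r : ℝ) :
    Set (ℝ → H) :=
  {u | MemLinfty u 0 T ∧ ‖stateT U B T τ u y₀ - z_d‖ ≤ r}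

/-- The optimal norm `M(τ,r)` of `(NP)^{τ,r}`. -/
def MNP (U : ℝ → H →L[ℂ] H) (B : H →L[ℂ] H) (y₀ z_d : H) (T τ r : ℝ) : ℝ :=
  sInf ((fun u : ℝ → H => supNorm u τ T) '' WadmSet U B y₀ z_d T τ r)

/-- `u` is an optimal control to `(NP)^{τ,r}`. -/
def IsOptNP (U : ℝ → H →L[ℂ] H) (B : H →L[ℂ] H) (y₀ z_d : H) (T τ r : ℝ) (u : ℝ → H) :
    Prop :=
  u ∈ WadmSet U B y₀ z_d T τ r ∧ supNorm u τ T = MNP U B y₀ z_d T τ r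

/-- The admissible set `V_{M,r}` of the second type optimal time problem `(TP)^{M,r}`. -/
def VadmSet (U : ℝ → H →L[ℂ] H) (B : H →L[ℂ] H) (y₀ z_d : H) (T M r : ℝ) :
    Set (ℝ → H) :=
  {u | ∃ τ : ℝ, τ ∈ Ico (0 : ℝ) T ∧ u ∈ UadmSet M τ T ∧
    ‖stateT U B T τ u y₀ - z_d‖ ≤ r}

/-- `τ_{M,r}(u)`. -/
def tauOf (U : ℝ → H →L[ℂ] H) (B : H →L[ℂ] H) (y₀ z_d : H) (T r : ℝ) (u : ℝ → H) : ℝ :=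
  sSup {τ : ℝ | τ ∈ Ico (0 : ℝ) T ∧ ‖stateT U B T τ u y₀ - z_d‖ ≤ r}

/-- The optimal time `τ(M,r)` of `(TP)^{M,r}`. -/
def tauTP (U : ℝ → H →L[ℂ] H) (B : H →L[ℂ] H) (y₀ z_d : H) (T M r : ℝ) : ℝ :=
  sSup (tauOf U B y₀ z_d T r '' VadmSet U B y₀ z_d T M r)

/-- `u` is an optimal control to `(TP)^{M,r}`. -/
def IsOptTP (U : ℝ → H →L[ℂ] H) (B : H →L[ℂ] H) (y₀ z_d : H) (T M r : ℝ) (u : ℝ → H) :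
    Prop :=
  u ∈ VadmSet U B y₀ z_d T M r ∧
    ‖stateT U B T (tauTP U B y₀ z_d T M r) u y₀ - z_d‖ ≤ r

/-- The adjoint state `φ*(t) = U(t-T)(z_d - y(T; χ_{(τ,T)}u, y₀))`. -/
def adjState (U : ℝ → H →L[ℂ] H) (B : H →L[ℂ] H) (y₀ z_d : H) (T τ : ℝ) (u : ℝ → H)
    (t : ℝ) : H :=
  U (t - T) (z_d - stateT U B T τ u y₀)

/-
The controls bounded by `M` on `(τ,T)` form a weakly compact subset of `L²((τ,T);H)`, the state
`y(T; χ_{(τ,T)}u, y₀)` depends weakly continuously on the control, and the norm of `H` is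
weakly lower semicontinuous. Hence limits of minimising sequences are optimal: this gives a
control of norm `M(0,r) ≤ M` reaching `B(z_d,r)`, so `V_{M,r} ≠ ∅`, and an optimal control for
`(TP)^{M,r}` as the limit of controls `u_n` with `τ_{M,r}(u_n) → τ(M,r)`. The state is Lipschitz
in the switching time `τ` with constant `‖B‖ M`, so the supremum defining `τ_{M,r}(u)` is
attained, and steering `U(T)y₀` into `B(z_d,r)` on `(τ,T)` forces `T - τ ≥ (r_T - r)/(‖B‖ M)`.
-/

open scoped InnerProductSpace InnerProduct

section Hilbert

variable {𝕜 E : Type*} [RCLike 𝕜] [NormedAddCommGroup E] [InnerProductSpace 𝕜 E]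

open RCLike

theorem norm_le_of_forall_re_inner_le {D : Set E} (hD : Dense D) {x : E} {M : ℝ} (hM : 0 ≤ M)
    (h : ∀ d ∈ D, re ⟪d, x⟫_𝕜 ≤ ‖d‖ * M) : ‖x‖ ≤ M := by
  have hclosed : IsClosed {d : E | re ⟪d, x⟫_𝕜 ≤ ‖d‖ * M} :=
    isClosed_le (by fun_prop) (by fun_prop)
  have hx : ‖x‖ * ‖x‖ ≤ ‖x‖ * M := by
    rw [← inner_self_eq_norm_mul_norm (𝕜 := 𝕜)]
    exact (hD.closure_eq ▸ hclosed.closure_subset_iff.2 h) (mem_univ x)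
  rcases (norm_nonneg x).eq_or_lt with h0 | h0
  · rwa [← h0]
  · exact le_of_mul_le_mul_left hx h0

theorem norm_le_of_tendsto_inner {ι : Type*} {l : Filter ι} [l.NeBot] {x : E} {y : ι → E}
    {r : ι → ℝ} {ρ : ℝ} (hy : Tendsto (fun i => ⟪x, y i⟫_𝕜) l (𝓝 ⟪x, x⟫_𝕜))
    (hr : Tendsto r l (𝓝 ρ)) (hyr : ∀ i, ‖y i‖ ≤ r i) : ‖x‖ ≤ ρ := by
  have hx : ‖x‖ * ‖x‖ ≤ ‖x‖ * ρ := by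
    rw [← inner_self_eq_norm_mul_norm (𝕜 := 𝕜)]
    refine le_of_tendsto_of_tendsto' ((continuous_re.tendsto _).comp hy) (hr.const_mul _)
      fun i => ?_
    calc re ⟪x, y i⟫_𝕜 ≤ ‖⟪x, y i⟫_𝕜‖ := re_le_norm _
      _ ≤ ‖x‖ * ‖y i‖ := norm_inner_le_norm _ _
      _ ≤ ‖x‖ * r i := by gcongr; exact hyr i
  rcases (norm_nonneg x).eq_or_lt with h0 | h0
  · rw [← h0]
    exact ge_of_tendsto hr (.of_forall fun i => (norm_nonneg _).trans (hyr i))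
  · exact le_of_mul_le_mul_left hx h0

theorem exists_tendsto_inner_of_eventually_norm_le [CompleteSpace E] {ι : Type*}
    (𝒰 : Ultrafilter ι) {v : ι → E} {R : ℝ} (hv : ∀ᶠ i in 𝒰, ‖v i‖ ≤ R) :
    ∃ v' : E, ∀ w, Tendsto (fun i => ⟪w, v i⟫_𝕜) 𝒰 (𝓝 ⟪w, v'⟫_𝕜) := by
  have hbound : ∀ w, ∀ᶠ i in 𝒰, ‖⟪v i, w⟫_𝕜‖ ≤ R * ‖w‖ := fun w =>
    hv.mono fun i hi => (norm_inner_le_norm _ _).trans (by gcongr)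
  have hlim : ∀ w, ∃ c, Tendsto (fun i => ⟪v i, w⟫_𝕜) 𝒰 (𝓝 c) := fun w => by
    obtain ⟨c, -, hc⟩ := (isCompact_closedBall (0 : 𝕜) (R * ‖w‖)).ultrafilter_le_nhds
      (𝒰.map fun i => ⟪v i, w⟫_𝕜) (by
        rw [Ultrafilter.coe_map, le_principal_iff]
        exact (hbound w).mono fun i hi => mem_closedBall_zero_iff.2 hi)
    exact ⟨c, hc⟩
  choose L hL using hlim
  let φ : StrongDual 𝕜 E := LinearMap.mkContinuous
    { toFun := L
      map_add' := fun w w' => tendsto_nhds_unique (hL _)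
        (by simpa only [inner_add_right] using (hL w).add (hL w'))
      map_smul' := fun c w => tendsto_nhds_unique (hL _)
        (by simpa only [inner_smul_right, RingHom.id_apply, smul_eq_mul] using (hL w).const_mul c) }
    R fun w => le_of_tendsto (hL w).norm (hbound w)
  refine ⟨(InnerProductSpace.toDual 𝕜 E).symm φ, fun w => ?_⟩
  have hφ : ⟪(InnerProductSpace.toDual 𝕜 E).symm φ, w⟫_𝕜 = L w :=
    InnerProductSpace.toDual_symm_apply
  rw [← inner_conj_symm, hφ]
  simpa [Function.comp_def] using (continuous_conj.tendsto _).comp (hL w)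

end Hilbert

section WeakLimitBound

variable {𝕜 E α ι : Type*} [RCLike 𝕜] [NormedAddCommGroup E] [InnerProductSpace 𝕜 E]
  [MeasurableSpace α] {μ : Measure α} [IsFiniteMeasure μ] {l : Filter ι} [l.NeBot]
  {f : ι → Lp E 2 μ} {g : Lp E 2 μ} {c : ι → ℝ} {M : ℝ}

open RCLike

theorem ae_re_inner_le_of_tendsto_inner
    (hfg : ∀ h : Lp E 2 μ, Tendsto (fun i => ⟪h, f i⟫_𝕜) l (𝓝 ⟪h, g⟫_𝕜))
    (hc : Tendsto c l (𝓝 M)) (hf : ∀ i, ∀ᵐ x ∂μ, ‖f i x‖ ≤ c i) (d : E) :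
    ∀ᵐ x ∂μ, re ⟪d, g x⟫_𝕜 ≤ ‖d‖ * M := by
  have hint : ∀ h : Lp E 2 μ, Integrable (fun x => re ⟪d, h x⟫_𝕜) μ := fun h =>
    (((Lp.memLp h).integrable one_le_two).const_inner d).re
  refine ae_le_of_forall_setIntegral_le (hint g) (integrable_const _) fun A hA hAfin => ?_
  have hA : ∀ h : Lp E 2 μ,
      ∫ x in A, re ⟪d, h x⟫_𝕜 ∂μ = re ⟪indicatorConstLp 2 hA hAfin.ne d, h⟫_𝕜 := by
    intro h
    rw [L2.inner_indicatorConstLp_eq_setIntegral_inner,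
      integral_re (((Lp.memLp h).integrable one_le_two).const_inner d).restrict]
  rw [hA, setIntegral_const, smul_eq_mul]
  refine le_of_tendsto_of_tendsto' ((continuous_re.tendsto _).comp (hfg _))
    ((hc.const_mul ‖d‖).const_mul _) fun i => ?_
  rw [Function.comp_apply, ← hA, ← smul_eq_mul, ← setIntegral_const]
  refine setIntegral_mono_ae (hint _).integrableOn (integrable_const _).integrableOn ?_
  filter_upwards [hf i] with x hx
  calc re ⟪d, f i x⟫_𝕜 ≤ ‖⟪d, f i x⟫_𝕜‖ := re_le_norm _
    _ ≤ ‖d‖ * ‖f i x‖ := norm_inner_le_norm _ _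
    _ ≤ ‖d‖ * c i := by gcongr

theorem ae_norm_le_of_tendsto_inner [SecondCountableTopology E]
    (hfg : ∀ h : Lp E 2 μ, Tendsto (fun i => ⟪h, f i⟫_𝕜) l (𝓝 ⟪h, g⟫_𝕜))
    (hc : Tendsto c l (𝓝 M)) (hf : ∀ i, ∀ᵐ x ∂μ, ‖f i x‖ ≤ c i) (hM : 0 ≤ M) :
    ∀ᵐ x ∂μ, ‖g x‖ ≤ M := by
  obtain ⟨D, hDc, hD⟩ := TopologicalSpace.exists_countable_dense E
  filter_upwards [(ae_ball_iff hDc).2 fun d _ => ae_re_inner_le_of_tendsto_inner hfg hc hf d]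
    with x hx
  exact norm_le_of_forall_re_inner_le hD hM hx

end WeakLimitBound

section LinftyNorm

variable {H : Type*} [NormedAddCommGroup H]

theorem supNorm_nonneg (u : ℝ → H) (a b : ℝ) : 0 ≤ supNorm u a b :=
  Real.sInf_nonneg fun _ hc => hc.1

theorem ae_norm_le_of_supNorm_lt {u : ℝ → H} {a b x : ℝ} (hu : MemLinfty u a b)
    (h : supNorm u a b < x) : ∀ᵐ t, t ∈ Ioo a b → ‖u t‖ ≤ x := by
  obtain ⟨-, c, hc⟩ := hu
  have hne : {c | 0 ≤ c ∧ ∀ᵐ t, t ∈ Ioo a b → ‖u t‖ ≤ c}.Nonempty :=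
    ⟨max c 0, le_max_right _ _, hc.mono fun t h ht => (h ht).trans (le_max_left _ _)⟩
  obtain ⟨d, hd, hdx⟩ := exists_lt_of_csInf_lt hne h
  exact hd.2.mono fun t h ht => (h ht).trans hdx.le

end LinftyNorm

theorem integrableOn_Ioo_of_ae_norm_le {E : Type*} [NormedAddCommGroup E] {u : ℝ → E}
    {a b c : ℝ} (hu : AEStronglyMeasurable u) (hbd : ∀ᵐ t, t ∈ Ioo a b → ‖u t‖ ≤ c) :
    IntegrableOn u (Ioo a b) :=
  Measure.integrableOn_of_bounded measure_Ioo_lt_top.ne hu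
    ((ae_restrict_iff' measurableSet_Ioo).2 hbd)

namespace IsUnitaryGroup

variable {H : Type*} [NormedAddCommGroup H] [InnerProductSpace ℂ H] {U : ℝ → H →L[ℂ] H}

theorem norm_apply (hU : IsUnitaryGroup U) (t : ℝ) (x : H) : ‖U t x‖ = ‖x‖ := hU.2.2.1 t x

theorem neg_apply_apply (hU : IsUnitaryGroup U) (t : ℝ) (x : H) : U (-t) (U t x) = x := by
  simpa [hU.1] using (congrArg (fun L : H →L[ℂ] H => L x) (hU.2.1 (-t) t)).symm

theorem inner_apply_right (hU : IsUnitaryGroup U) (t : ℝ) (x y : H) :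
    ⟪x, U t y⟫_ℂ = ⟪U (-t) x, y⟫_ℂ := by
  let V : H →ₗᵢ[ℂ] H := ⟨(U (-t)).toLinearMap, hU.norm_apply (-t)⟩
  simpa [V, hU.neg_apply_apply] using (V.inner_map_map x (U t y)).symm

theorem continuous_uncurry (hU : IsUnitaryGroup U) : Continuous fun p : ℝ × H => U p.1 p.2 := by
  refine continuous_iff_continuousAt.2 fun ⟨t₀, x₀⟩ => ?_
  have hsplit : ∀ p : ℝ × H, U p.1 p.2 = U p.1 (p.2 - x₀) + U p.1 x₀ := fun p => by
    rw [← map_add, sub_add_cancel]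
  have hsmall : Tendsto (fun p : ℝ × H => U p.1 (p.2 - x₀)) (𝓝 (t₀, x₀)) (𝓝 0) := by
    refine squeeze_zero_norm (fun p => (hU.norm_apply p.1 (p.2 - x₀)).le) ?_
    simpa using ((continuous_snd.sub (continuous_const (y := x₀))).norm.tendsto (t₀, x₀))
  have h := hsmall.add (((hU.2.2.2 x₀).comp continuous_fst).tendsto (t₀, x₀))
  rw [zero_add] at h
  exact h.congr fun p => (hsplit p).symm

end IsUnitaryGroup

section Duhamel

variable {H : Type*} [NormedAddCommGroup H] [InnerProductSpace ℂ H] {U : ℝ → H →L[ℂ] H}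
  {B : H →L[ℂ] H}

theorem aestronglyMeasurable_duhamel (hU : IsUnitaryGroup U) {μ : Measure ℝ} {u : ℝ → H}
    (hu : AEStronglyMeasurable u μ) (T : ℝ) :
    AEStronglyMeasurable (fun s => U (T - s) (B (u s))) μ :=
  hU.continuous_uncurry.comp_aestronglyMeasurable
    ((continuous_const.sub continuous_id).aestronglyMeasurable.prodMk
      (B.continuous.comp_aestronglyMeasurable hu))

theorem integrable_duhamel (hU : IsUnitaryGroup U) {μ : Measure ℝ} {u : ℝ → H}
    (hu : Integrable u μ) (T : ℝ) : Integrable (fun s => U (T - s) (B (u s))) μ :=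
  (hu.norm.const_mul ‖B‖).mono' (aestronglyMeasurable_duhamel hU hu.1 T)
    (.of_forall fun s => by rw [hU.norm_apply]; exact B.le_opNorm _)

theorem norm_setIntegral_duhamel_le (hU : IsUnitaryGroup U) {u : ℝ → H} {a b c T : ℝ}
    (hab : a ≤ b) (hbd : ∀ᵐ t, t ∈ Ioo a b → ‖u t‖ ≤ c) :
    ‖∫ s in Ioo a b, U (T - s) (B (u s))‖ ≤ ‖B‖ * c * (b - a) := by
  have h := norm_setIntegral_le_of_norm_le_const_ae' (C := ‖B‖ * c)
    (f := fun s => U (T - s) (B (u s))) measure_Ioo_lt_top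
    (hbd.mono fun t ht hmem => by
      rw [hU.norm_apply]; exact (B.le_opNorm _).trans (by gcongr; exact ht hmem))
  rwa [Real.volume_real_Ioo_of_le hab] at h

theorem stateT_self (T : ℝ) (u : ℝ → H) (y₀ : H) : stateT U B T T u y₀ = U T y₀ := by
  simp [stateT]

theorem norm_stateT_sub_stateT_le (hU : IsUnitaryGroup U) {u : ℝ → H} {τ₁ τ₂ T c : ℝ}
    (y₀ : H) (hu : AEStronglyMeasurable u) (h₁₂ : τ₁ ≤ τ₂) (h₂ : τ₂ ≤ T)
    (hbd : ∀ᵐ t, t ∈ Ioo τ₁ T → ‖u t‖ ≤ c) :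
    ‖stateT U B T τ₁ u y₀ - stateT U B T τ₂ u y₀‖ ≤ ‖B‖ * c * (τ₂ - τ₁) := by
  have hint : IntegrableOn (fun s => U (T - s) (B (u s))) (Ioc τ₁ T) :=
    (integrableOn_Ioc_iff_integrableOn_Ioo).2
      (integrable_duhamel hU (integrableOn_Ioo_of_ae_norm_le hu hbd) T)
  have hsplit : stateT U B T τ₁ u y₀ - stateT U B T τ₂ u y₀ =
      ∫ s in Ioo τ₁ τ₂, U (T - s) (B (u s)) := by
    simp only [stateT, ← integral_Ioc_eq_integral_Ioo, ← Ioc_union_Ioc_eq_Ioc h₁₂ h₂,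
      setIntegral_union (Ioc_disjoint_Ioc_of_le le_rfl) measurableSet_Ioc
        (hint.mono_set (Ioc_subset_Ioc_right h₂)) (hint.mono_set (Ioc_subset_Ioc_left h₁₂))]
    abel
  rw [hsplit]
  exact norm_setIntegral_duhamel_le hU h₁₂
    (hbd.mono fun t h ht => h (Ioo_subset_Ioo_right h₂ ht))

theorem continuousOn_stateT (hU : IsUnitaryGroup U) {u : ℝ → H} {a T c : ℝ} (y₀ : H)
    (hu : AEStronglyMeasurable u) (hbd : ∀ᵐ t, t ∈ Ioo a T → ‖u t‖ ≤ c) :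
    ContinuousOn (fun τ => stateT U B T τ u y₀) (Icc a T) := by
  refine (LipschitzOnWith.of_dist_le_mul (K := (‖B‖ * c).toNNReal)
    fun x hx y hy => ?_).continuousOn
  wlog hxy : x ≤ y generalizing x y
  · rw [dist_comm, dist_comm x]
    exact this y hy x hx (le_of_not_ge hxy)
  rw [dist_eq_norm, Real.dist_eq, abs_sub_comm, abs_of_nonneg (sub_nonneg.2 hxy)]
  refine (norm_stateT_sub_stateT_le hU y₀ hu hxy hy.2
    (hbd.mono fun t h ht => h (Ioo_subset_Ioo_left hx.1 ht))).trans ?_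
  exact mul_le_mul_of_nonneg_right (Real.le_coe_toNNReal _) (sub_nonneg.2 hxy)

theorem exists_inner_stateT_sub_eq [CompleteSpace H] (hU : IsUnitaryGroup U) (T a : ℝ)
    (y₀ z w : H) :
    ∃ k : Lp H 2 (volume.restrict (Ioo a T)),
      ∀ (f : ℝ → H) (fL : Lp H 2 (volume.restrict (Ioo a T))),
      (fL : ℝ → H) =ᵐ[volume.restrict (Ioo a T)] f →
      ⟪w, stateT U B T a f y₀ - z⟫_ℂ = ⟪w, U T y₀ - z⟫_ℂ + ⟪k, fL⟫_ℂ := by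
  have hcont : Continuous fun s : ℝ => (B†) (U (s - T) w) :=
    (B†).continuous.comp (hU.continuous_uncurry.comp
      ((continuous_id.sub continuous_const).prodMk continuous_const))
  have hmem : MemLp (fun s : ℝ => (B†) (U (s - T) w)) 2 (volume.restrict (Ioo a T)) :=
    .of_bound hcont.aestronglyMeasurable (‖(B†)‖ * ‖w‖)
      (.of_forall fun s => ((B†).le_opNorm _).trans_eq (by rw [hU.norm_apply]))
  refine ⟨hmem.toLp, fun f fL hfL => ?_⟩
  have hint : Integrable (fun s => U (T - s) (B (fL s))) (volume.restrict (Ioo a T)) :=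
    integrable_duhamel hU ((Lp.memLp fL).integrable one_le_two) T
  rw [stateT, add_sub_right_comm, inner_add_right,
    ← integral_congr_ae (f := fun s => U (T - s) (B (fL s))) (hfL.mono fun s hs => by simp [hs]),
    ← integral_inner hint, L2.inner_def]
  congr 1
  refine integral_congr_ae (hmem.coeFn_toLp.mono fun s hs => ?_)
  dsimp only at hs ⊢
  rw [hs, ContinuousLinearMap.adjoint_inner_left, hU.inner_apply_right, neg_sub]

end Duhamel

section OptimalControl

variable {H : Type*} [NormedAddCommGroup H] [InnerProductSpace ℂ H] {U : ℝ → H →L[ℂ] H}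
  {B : H →L[ℂ] H} {y₀ z_d : H} {T M r : ℝ}

theorem exists_bounded_control_of_tendsto [CompleteSpace H] [SecondCountableTopology H]
    (hU : IsUnitaryGroup U) {ι : Type*} {l : Filter ι} [l.NeBot] {a : ℝ} (hM : 0 ≤ M)
    {u : ι → ℝ → H} (hu : ∀ i, AEStronglyMeasurable (u i)) {c ρ : ι → ℝ}
    (hc : Tendsto c l (𝓝 M)) (hbd : ∀ i, ∀ᵐ t, t ∈ Ioo a T → ‖u i t‖ ≤ c i)
    (hρ : Tendsto ρ l (𝓝 r)) (hst : ∀ i, ‖stateT U B T a (u i) y₀ - z_d‖ ≤ ρ i) :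
    ∃ v : ℝ → H, AEStronglyMeasurable v ∧ (∀ t, ‖v t‖ ≤ M) ∧
      ‖stateT U B T a v y₀ - z_d‖ ≤ r := by
  set μ := volume.restrict (Ioo a T)
  have hbdμ : ∀ i, ∀ᵐ t ∂μ, ‖u i t‖ ≤ c i := fun i =>
    (ae_restrict_iff' measurableSet_Ioo).2 (hbd i)
  have hmem : ∀ i, MemLp (u i) 2 μ := fun i => .of_bound (hu i).restrict _ (hbdμ i)
  set f : ι → Lp H 2 μ := fun i => (hmem i).toLp
  have hfbd : ∀ i, ∀ᵐ t ∂μ, ‖f i t‖ ≤ c i := fun i => by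
    filter_upwards [(hmem i).coeFn_toLp, hbdμ i] with t ht hct
    rwa [ht]
  -- an ultrafilter finer than `l` replaces the extraction of a weakly convergent subsequence
  let 𝒰 := Ultrafilter.of l
  have h𝒰 : ↑𝒰 ≤ l := Ultrafilter.of_le l
  obtain ⟨g, hg⟩ :
      ∃ g : Lp H 2 μ, ∀ h, Tendsto (fun i => ⟪h, f i⟫_ℂ) 𝒰 (𝓝 ⟪h, g⟫_ℂ) := by
    refine exists_tendsto_inner_of_eventually_norm_le 𝒰
      (R := (measureUnivNNReal μ : ℝ) ^ (2 : ENNReal).toReal⁻¹ * (M + 1)) ?_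
    filter_upwards [h𝒰 (hc.eventually (eventually_le_nhds (lt_add_one M)))] with i hi
    exact Lp.norm_le_of_ae_bound (by linarith) ((hfbd i).mono fun t ht => ht.trans hi)
  have hgM : ∀ᵐ t ∂μ, ‖g t‖ ≤ M :=
    ae_norm_le_of_tendsto_inner hg (hc.mono_left h𝒰) hfbd hM
  set v : ℝ → H := fun t => if ‖g t‖ ≤ M then g t else 0
  have hvg : (g : ℝ → H) =ᵐ[μ] v := hgM.mono fun t ht => (if_pos ht).symm
  refine ⟨v, ?_, fun t => ?_, ?_⟩
  · have hg := Lp.stronglyMeasurable g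
    exact (hg.ite (measurableSet_le hg.norm.measurable measurable_const)
      stronglyMeasurable_const).aestronglyMeasurable
  · by_cases ht : ‖g t‖ ≤ M <;> simp [v, ht, hM]
  obtain ⟨k, hk⟩ :=
    exists_inner_stateT_sub_eq (B := B) hU T a y₀ z_d (stateT U B T a v y₀ - z_d)
  refine norm_le_of_tendsto_inner (𝕜 := ℂ) (l := 𝒰) ?_ (hρ.mono_left h𝒰) hst
  rw [hk v g hvg]
  exact (tendsto_const_nhds.add (hg k)).congr fun i => (hk _ _ (hmem i).coeFn_toLp).symm

theorem exists_bounded_control_of_MNP_le [CompleteSpace H] [SecondCountableTopology H]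
    (hU : IsUnitaryGroup U) (hW : (WadmSet U B y₀ z_d T 0 r).Nonempty)
    (hM : MNP U B y₀ z_d T 0 r ≤ M) :
    ∃ v : ℝ → H, AEStronglyMeasurable v ∧ (∀ t, ‖v t‖ ≤ M) ∧
      ‖stateT U B T 0 v y₀ - z_d‖ ≤ r := by
  have hM0 : 0 ≤ M :=
    (Real.sInf_nonneg (by rintro _ ⟨u, -, rfl⟩; exact supNorm_nonneg u 0 T)).trans hM
  have hseq : ∀ n : ℕ, ∃ u ∈ WadmSet U B y₀ z_d T 0 r, supNorm u 0 T < M + 1 / (n + 1) :=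
    fun n => by
      obtain ⟨_, ⟨u, hu, rfl⟩, hlt⟩ := exists_lt_of_csInf_lt (hW.image _)
        (hM.trans_lt (lt_add_of_pos_right M Nat.one_div_pos_of_nat))
      exact ⟨u, hu, hlt⟩
  choose u hu hlt using hseq
  refine exists_bounded_control_of_tendsto hU (l := atTop) hM0 (fun n => (hu n).1.1) ?_
    (fun n => ae_norm_le_of_supNorm_lt (hu n).1 (hlt n)) tendsto_const_nhds (fun n => (hu n).2)
  simpa using tendsto_one_div_add_atTop_nhds_zero_nat.const_add M

theorem mem_VadmSet_of_norm_le {v : ℝ → H} {τ : ℝ} (hv : AEStronglyMeasurable v)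
    (hvM : ∀ t, ‖v t‖ ≤ M) (hτ : τ ∈ Ico 0 T)
    (hvr : ‖stateT U B T τ v y₀ - z_d‖ ≤ r) :
    v ∈ VadmSet U B y₀ z_d T M r :=
  ⟨τ, hτ, ⟨⟨hv, M, .of_forall fun t _ => hvM t⟩, .of_forall fun t _ => hvM t⟩, hvr⟩

theorem aestronglyMeasurable_of_mem_VadmSet {u : ℝ → H}
    (hu : u ∈ VadmSet U B y₀ z_d T M r) : AEStronglyMeasurable u :=
  let ⟨_, _, ⟨⟨hmeas, _⟩, _⟩, _⟩ := hu
  hmeas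

theorem ae_norm_le_of_mem_VadmSet {u : ℝ → H} (hu : u ∈ VadmSet U B y₀ z_d T M r) :
    ∀ᵐ t, t ∈ Ioo (tauOf U B y₀ z_d T r u) T → ‖u t‖ ≤ M := by
  obtain ⟨τ₀, hτ₀, ⟨-, hM⟩, hτ₀r⟩ := hu
  have hτ₀le : τ₀ ≤ tauOf U B y₀ z_d T r u :=
    le_csSup ⟨T, fun τ hτ => hτ.1.2.le⟩ ⟨hτ₀, hτ₀r⟩
  exact hM.mono fun t h ht => h (Ioo_subset_Ioo_left hτ₀le ht)

theorem tauOf_spec (hU : IsUnitaryGroup U) (hr : r < ‖U T y₀ - z_d‖) {u : ℝ → H}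
    (hu : u ∈ VadmSet U B y₀ z_d T M r) :
    tauOf U B y₀ z_d T r u ∈ Ico 0 T ∧
      ‖stateT U B T (tauOf U B y₀ z_d T r u) u y₀ - z_d‖ ≤ r := by
  obtain ⟨τ₀, hτ₀, ⟨⟨hmeas, c, hc⟩, -⟩, hτ₀r⟩ := hu
  set S := Icc 0 T ∩ (fun τ => ‖stateT U B T τ u y₀ - z_d‖) ⁻¹' Iic r
  have hS : {τ | τ ∈ Ico 0 T ∧ ‖stateT U B T τ u y₀ - z_d‖ ≤ r} = S := by
    ext τ
    refine ⟨fun h => ⟨Ico_subset_Icc_self h.1, h.2⟩,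
      fun h => ⟨⟨h.1.1, h.1.2.lt_of_ne ?_⟩, h.2⟩⟩
    rintro rfl
    exact hr.not_ge (by simpa [stateT_self] using h.2)
  have hSc : IsCompact S := isCompact_Icc.of_isClosed_subset
    (((continuousOn_stateT hU y₀ hmeas hc).sub continuousOn_const).norm
      |>.preimage_isClosed_of_isClosed isClosed_Icc isClosed_Iic) inter_subset_left
  have hmem := hSc.sSup_mem ⟨τ₀, Ico_subset_Icc_self hτ₀, hτ₀r⟩
  rw [← hS] at hmem
  exact hmem

theorem norm_stateT_sub_le_of_mem_VadmSet (hU : IsUnitaryGroup U) (hr : r < ‖U T y₀ - z_d‖)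
    {u : ℝ → H} (hu : u ∈ VadmSet U B y₀ z_d T M r) {τ : ℝ}
    (hτ : tauOf U B y₀ z_d T r u ≤ τ) (hτT : τ ≤ T) :
    ‖stateT U B T τ u y₀ - z_d‖ ≤ r + ‖B‖ * M * (τ - tauOf U B y₀ z_d T r u) := by
  calc ‖stateT U B T τ u y₀ - z_d‖
      ≤ ‖stateT U B T τ u y₀ - stateT U B T (tauOf U B y₀ z_d T r u) u y₀‖ +
          ‖stateT U B T (tauOf U B y₀ z_d T r u) u y₀ - z_d‖ :=
        norm_sub_le_norm_sub_add_norm_sub _ _ _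
    _ ≤ ‖B‖ * M * (τ - tauOf U B y₀ z_d T r u) + r := by
        rw [norm_sub_rev]
        exact add_le_add (norm_stateT_sub_stateT_le hU y₀ (aestronglyMeasurable_of_mem_VadmSet hu)
          hτ hτT (ae_norm_le_of_mem_VadmSet hu)) (tauOf_spec hU hr hu).2
    _ = _ := add_comm _ _

theorem norm_mul_pos_of_mem_VadmSet (hU : IsUnitaryGroup U) (hr : r < ‖U T y₀ - z_d‖)
    {u : ℝ → H} (hu : u ∈ VadmSet U B y₀ z_d T M r) : 0 < ‖B‖ * M := by
  have hτ := (tauOf_spec hU hr hu).1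
  have h := norm_stateT_sub_le_of_mem_VadmSet hU hr hu hτ.2.le le_rfl
  rw [stateT_self] at h
  by_contra! hle
  linarith [mul_nonpos_of_nonpos_of_nonneg hle (sub_nonneg.2 hτ.2.le)]

theorem tauOf_le (hU : IsUnitaryGroup U) (hr : r < ‖U T y₀ - z_d‖) {u : ℝ → H}
    (hu : u ∈ VadmSet U B y₀ z_d T M r) :
    tauOf U B y₀ z_d T r u ≤ T - (‖U T y₀ - z_d‖ - r) / (‖B‖ * M) := by
  have h := norm_stateT_sub_le_of_mem_VadmSet hU hr hu (tauOf_spec hU hr hu).1.2.le le_rfl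
  rw [stateT_self] at h
  rw [le_sub_comm, div_le_iff₀ (norm_mul_pos_of_mem_VadmSet hU hr hu)]
  linarith

theorem tauTP_lt (hU : IsUnitaryGroup U) (hr : r < ‖U T y₀ - z_d‖)
    (hV : (VadmSet U B y₀ z_d T M r).Nonempty) : tauTP U B y₀ z_d T M r < T := by
  have ⟨u, hu⟩ := hV
  have hρ : 0 < (‖U T y₀ - z_d‖ - r) / (‖B‖ * M) :=
    div_pos (sub_pos.2 hr) (norm_mul_pos_of_mem_VadmSet hU hr hu)
  have h := csSup_le (hV.image _)
    (by rintro _ ⟨v, hv, rfl⟩; exact tauOf_le hU hr hv)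
  unfold tauTP
  linarith

theorem exists_isOptTP [CompleteSpace H] [SecondCountableTopology H] (hU : IsUnitaryGroup U)
    (hr : r < ‖U T y₀ - z_d‖) (hV : (VadmSet U B y₀ z_d T M r).Nonempty) :
    ∃ u, IsOptTP U B y₀ z_d T M r u := by
  have hA : BddAbove (tauOf U B y₀ z_d T r '' VadmSet U B y₀ z_d T M r) :=
    ⟨T, by rintro _ ⟨u, hu, rfl⟩; exact (tauOf_spec hU hr hu).1.2.le⟩
  obtain ⟨τ, -, hτ, hτA⟩ := exists_seq_tendsto_sSup (hV.image _) hA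
  choose w hw hwτ using hτA
  have hwτ' : Tendsto (fun n => tauOf U B y₀ z_d T r (w n)) atTop
      (𝓝 (tauTP U B y₀ z_d T M r)) := hτ.congr fun n => (hwτ n).symm
  have hτle : ∀ n, tauOf U B y₀ z_d T r (w n) ≤ tauTP U B y₀ z_d T M r := fun n =>
    le_csSup hA ⟨w n, hw n, rfl⟩
  have hT := tauTP_lt hU hr hV
  have hM : 0 ≤ M :=
    (pos_of_mul_pos_right (norm_mul_pos_of_mem_VadmSet hU hr (hw 0)) (norm_nonneg B)).le
  obtain ⟨v, hvm, hvM, hvr⟩ := exists_bounded_control_of_tendsto hU (l := atTop) (r := r) hM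
    (ρ := fun n => r + ‖B‖ * M * (tauTP U B y₀ z_d T M r - tauOf U B y₀ z_d T r (w n)))
    (fun n => aestronglyMeasurable_of_mem_VadmSet (hw n)) tendsto_const_nhds
    (fun n => (ae_norm_le_of_mem_VadmSet (hw n)).mono fun t h ht =>
      h (Ioo_subset_Ioo_left (hτle n) ht))
    (by simpa using (((tendsto_const_nhds (x := tauTP U B y₀ z_d T M r)).sub hwτ').const_mul
      (‖B‖ * M)).const_add r)
    (fun n => norm_stateT_sub_le_of_mem_VadmSet hU hr (hw n) (hτle n) hT.le)
  refine ⟨v, mem_VadmSet_of_norm_le hvm hvM ⟨?_, hT⟩ hvr, hvr⟩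
  exact (tauOf_spec hU hr (hw 0)).1.1.trans (hτle 0)

end OptimalControl

theorem tp_has_optimal_control_general
    (U : ℝ → H →L[ℂ] H) (B : H →L[ℂ] H) (hU : IsUnitaryGroup U)
    (hEC : EC U B)
    (T : ℝ) (hT : 0 < T) (y₀ z_d : H)
    (M r : ℝ) (hr : r ∈ Ioo (0 : ℝ) ‖U T y₀ - z_d‖) (hM : MNP U B y₀ z_d T 0 r ≤ M) :
    (VadmSet U B y₀ z_d T M r).Nonempty ∧
    (∀ u ∈ VadmSet U B y₀ z_d T M r,
      ‖stateT U B T (tauOf U B y₀ z_d T r u) u y₀ - z_d‖ ≤ r) ∧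
    (∃ u : ℝ → H, IsOptTP U B y₀ z_d T M r u) ∧
    tauTP U B y₀ z_d T M r < T := by
  obtain ⟨C, -, hC⟩ := hEC T hT
  obtain ⟨u₀, hu₀, hu₀C, hu₀z⟩ := hC y₀ z_d
  have hW : (WadmSet U B y₀ z_d T 0 r).Nonempty :=
    ⟨u₀, ⟨hu₀, _, hu₀C⟩, by simpa [hu₀z] using hr.1.le⟩
  obtain ⟨v, hvm, hvM, hvr⟩ := exists_bounded_control_of_MNP_le hU hW hM
  have hV : (VadmSet U B y₀ z_d T M r).Nonempty :=
    ⟨v, mem_VadmSet_of_norm_le hvm hvM ⟨le_rfl, hT⟩ hvr⟩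
  exact ⟨hV, fun u hu => (tauOf_spec hU hr.2 hu).2, exists_isOptTP hU hr.2 hV,
    tauTP_lt hU hr.2 hV⟩

theorem tp_has_optimal_control
    (U : ℝ → H →L[ℂ] H) (B : H →L[ℂ] H) (hU : IsUnitaryGroup U) (hB : IsOrthProj B)
    (hEC : EC U B) (hECrev : EC (fun t => U (-t)) B)
    (T : ℝ) (hT : 0 < T) (y₀ z_d : H) (hrT : 0 < ‖U T y₀ - z_d‖)
    (M r : ℝ) (hr : r ∈ Ioo (0 : ℝ) ‖U T y₀ - z_d‖) (hM : MNP U B y₀ z_d T 0 r ≤ M) :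
    (VadmSet U B y₀ z_d T M r).Nonempty ∧
    (∀ u ∈ VadmSet U B y₀ z_d T M r,
      ‖stateT U B T (tauOf U B y₀ z_d T r u) u y₀ - z_d‖ ≤ r) ∧
    (∃ u : ℝ → H, IsOptTP U B y₀ z_d T M r u) ∧
    tauTP U B y₀ z_d T M r < T :=
  tp_has_optimal_control_general U B hU hEC T hT y₀ z_d M r hr hM
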